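/- arXiv:2403.18478 — 5 statements merged into one kernel-verified Lean document; each statement's English description precedes it below -/
import Mathlib

section
/- Let d ≥ 1, m1 > 0, c12 > 0, n2 > 0, T12 > 0 and u12 ∈ ℝ^d. Let f1 : ℝ^d → ℝ be smooth, strictly positive and Gaussian-dominated, with n1 = ∫ f1 dv, u1 = (1/n1)∫ v f1 dv and T1 = (1/(d n1))∫ m1|v−u1|² f1 dv. Define Q12(v) = c12·n2·div_v( ∇_v((T12/m1) f1)(v) + (v−u12) f1(v) ). Then the energy exchange term satisfies ∫_{ℝ^d} (m1/2)|v|² Q12(v) dv = c12 n1 n2 d (T12 − T1) − c12 m1 n1 n2 u1·(u1 − u12). -/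
open MeasureTheory Real

noncomputable section

/-- Divergence of a vector field on `ℝ^d`. -/
def vdiv {d : ℕ} (F : EuclideanSpace ℝ (Fin d) → EuclideanSpace ℝ (Fin d))
    (v : EuclideanSpace ℝ (Fin d)) : ℝ :=
  ∑ i, fderiv ℝ F v (EuclideanSpace.single i 1) i

/-- `f` is Gaussian-dominated: all derivatives of order `≤ 2` are bounded by
`C · exp(-a|v|²)` for some `C, a > 0`. -/
def GaussianDominated {d : ℕ} (f : EuclideanSpace ℝ (Fin d) → ℝ) : Prop :=
  ∃ C a : ℝ, 0 < C ∧ 0 < a ∧ ∀ (k : ℕ), k ≤ 2 → ∀ v,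
    ‖iteratedFDeriv ℝ k f v‖ ≤ C * Real.exp (-a * ‖v‖ ^ 2)

/-- The Fokker–Planck operator `Q(v) = c · n · div_v(∇_v((T/m) f) + (v - u) f)(v)`. -/
def QFP {d : ℕ} (c n m T : ℝ) (u : EuclideanSpace ℝ (Fin d))
    (f : EuclideanSpace ℝ (Fin d) → ℝ) (v : EuclideanSpace ℝ (Fin d)) : ℝ :=
  c * n * vdiv (fun w => gradient (fun y => (T / m) * f y) w + f w • (w - u)) v

/-!
Write `Q12 = c12 n2 div J` with the flux `J = (T12/m1) ∇f1 + f1 (v - u12)`. Integrating by parts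
against `|v|²` turns `∫ |v|² div J` into `-2 ∫ v · J`. A second integration by parts, against the
field `v` of divergence `d`, gives `∫ v · ∇f1 = -d n1`, and the remaining part of `∫ v · J` is the
second moment of `f1` minus `n1 u1 · u12`. Expanding `|v - u1|²` expresses that second moment as
`n1 (d T1 / m1 + |u1|²)`. The Gaussian bounds on `f1` and its first two derivatives, which survive
multiplication by polynomial weights, make every integrand integrable.
-/

section GaussianDecay

variable {E F G : Type*} [NormedAddCommGroup E] [NormedAddCommGroup F] [NormedAddCommGroup G]

/-- The rate `b` is existential: a polynomial weight can be absorbed by halving it. -/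
def HasGaussianDecay (h : E → F) : Prop :=
  ∃ b K : ℝ, 0 < b ∧ ∀ v, ‖h v‖ ≤ K * exp (-b * ‖v‖ ^ 2)

theorem one_add_pow_mul_exp_neg_le {b t : ℝ} (hb : 0 < b) (ht : 0 ≤ t) (n : ℕ) :
    (1 + t) ^ n * exp (-b * t ^ 2) ≤ exp (n ^ 2 / (2 * b)) * exp (-(b / 2) * t ^ 2) := by
  have hpow : (1 + t) ^ n ≤ exp (n * t) := by
    rw [exp_nat_mul]
    gcongr
    linarith [add_one_le_exp t]
  have hsq : n ^ 2 / (2 * b) - b / 2 * t ^ 2 - (n * t - b * t ^ 2)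
      = (b * t - n) ^ 2 / (2 * b) := by
    field_simp
    ring
  have hquad : n * t - b * t ^ 2 ≤ n ^ 2 / (2 * b) - b / 2 * t ^ 2 := by
    linarith [div_nonneg (sq_nonneg (b * t - n)) (by positivity : (0 : ℝ) ≤ 2 * b)]
  calc (1 + t) ^ n * exp (-b * t ^ 2) ≤ exp (n * t) * exp (-b * t ^ 2) := by gcongr
    _ ≤ exp (n ^ 2 / (2 * b)) * exp (-(b / 2) * t ^ 2) := by
      rw [← exp_add, ← exp_add]
      exact exp_le_exp.mpr (by linarith)

theorem norm_sub_le_one_add_mul_one_add (x u : E) : ‖x - u‖ ≤ (1 + ‖u‖) * (1 + ‖x‖) := by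
  nlinarith [norm_sub_le x u, norm_nonneg x, norm_nonneg u]

namespace HasGaussianDecay

variable {g : E → G} {h h₁ h₂ : E → F}

theorem of_norm_le_poly_mul (hg : HasGaussianDecay g) (K : ℝ) (n : ℕ)
    (hle : ∀ v, ‖h v‖ ≤ K * (1 + ‖v‖) ^ n * ‖g v‖) : HasGaussianDecay h := by
  obtain ⟨b, C, hb, hC⟩ := hg
  refine ⟨b / 2, |K| * |C| * exp (n ^ 2 / (2 * b)), half_pos hb, fun v => ?_⟩
  calc ‖h v‖ ≤ K * (1 + ‖v‖) ^ n * ‖g v‖ := hle v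
    _ ≤ |K| * (1 + ‖v‖) ^ n * (|C| * exp (-b * ‖v‖ ^ 2)) := by
      gcongr
      · exact le_abs_self K
      · exact (hC v).trans (by gcongr; exact le_abs_self C)
    _ = |K| * |C| * ((1 + ‖v‖) ^ n * exp (-b * ‖v‖ ^ 2)) := by ring
    _ ≤ |K| * |C| * (exp (n ^ 2 / (2 * b)) * exp (-(b / 2) * ‖v‖ ^ 2)) :=
      mul_le_mul_of_nonneg_left (one_add_pow_mul_exp_neg_le hb (norm_nonneg v) n)
        (by positivity)
    _ = _ := by ring

theorem of_norm_le (hg : HasGaussianDecay g) (hle : ∀ v, ‖h v‖ ≤ ‖g v‖) : HasGaussianDecay h :=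
  hg.of_norm_le_poly_mul 1 0 fun v => by simpa using hle v

theorem add (hh₁ : HasGaussianDecay h₁) (hh₂ : HasGaussianDecay h₂) :
    HasGaussianDecay fun v => h₁ v + h₂ v := by
  obtain ⟨b₁, C₁, hb₁, hC₁⟩ := hh₁
  obtain ⟨b₂, C₂, hb₂, hC₂⟩ := hh₂
  refine ⟨min b₁ b₂, |C₁| + |C₂|, lt_min hb₁ hb₂, fun v => ?_⟩
  calc ‖h₁ v + h₂ v‖ ≤ C₁ * exp (-b₁ * ‖v‖ ^ 2) + C₂ * exp (-b₂ * ‖v‖ ^ 2) :=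
        (norm_add_le _ _).trans (add_le_add (hC₁ v) (hC₂ v))
    _ ≤ |C₁| * exp (-min b₁ b₂ * ‖v‖ ^ 2) + |C₂| * exp (-min b₁ b₂ * ‖v‖ ^ 2) := by
      gcongr
      exacts [le_abs_self _, min_le_left _ _, le_abs_self _, min_le_right _ _]
    _ = _ := by ring

variable [InnerProductSpace ℝ E] [FiniteDimensional ℝ E] [MeasurableSpace E] [BorelSpace E]

theorem integrable (hh : HasGaussianDecay h) (hm : AEStronglyMeasurable h) : Integrable h := by
  obtain ⟨b, C, hb, hC⟩ := hh
  have hgauss : Integrable fun v : E => exp (-b * ‖v‖ ^ 2) := by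
    refine (GaussianFourier.integrable_cexp_neg_mul_sq_norm_add (V := E) (b := b)
      (by simpa using hb) 0 0).norm.congr (Filter.Eventually.of_forall fun v => ?_)
    simp only [Complex.norm_exp, zero_mul, add_zero, Complex.neg_re, Complex.mul_re]
    norm_cast
    simp
  exact (hgauss.const_mul C).mono' hm (Filter.Eventually.of_forall hC)

variable {f : E → ℝ}

theorem integrable_smul_self (hf : HasGaussianDecay f) (hc : Continuous f) :
    Integrable fun v => f v • v :=
  (hf.of_norm_le_poly_mul 1 1 fun v => by
    rw [norm_smul, pow_one, one_mul, mul_comm]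
    gcongr
    linarith).integrable (by fun_prop)

theorem integrable_norm_sq_mul (hf : HasGaussianDecay f) (hc : Continuous f) :
    Integrable fun v => ‖v‖ ^ 2 * f v :=
  (hf.of_norm_le_poly_mul 1 2 fun v => by
    rw [norm_mul, norm_pow, norm_norm, one_mul]
    gcongr
    linarith).integrable (by fun_prop)

end HasGaussianDecay

end GaussianDecay

theorem integral_norm_sub_sq_mul {E : Type*} [NormedAddCommGroup E] [InnerProductSpace ℝ E]
    [CompleteSpace E] [MeasurableSpace E] {μ : Measure E} {f : E → ℝ} (hf : Integrable f μ)
    (hf₁ : Integrable (fun v => f v • v) μ) (hf₂ : Integrable (fun v => ‖v‖ ^ 2 * f v) μ)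
    (w : E) :
    ∫ v, ‖v - w‖ ^ 2 * f v ∂μ
      = (∫ v, ‖v‖ ^ 2 * f v ∂μ) - 2 * inner ℝ w (∫ v, f v • v ∂μ) + ‖w‖ ^ 2 * ∫ v, f v ∂μ := by
  have hpoint : ∀ v, ‖v - w‖ ^ 2 * f v
      = ‖v‖ ^ 2 * f v - 2 * inner ℝ w (f v • v) + ‖w‖ ^ 2 * f v := fun v => by
    rw [norm_sub_sq_real, inner_smul_right, real_inner_comm]
    ring
  simp_rw [hpoint]
  rw [integral_add (f := fun v => ‖v‖ ^ 2 * f v - 2 * inner ℝ w (f v • v))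
      (hf₂.sub ((hf₁.const_inner w).const_mul 2)) (hf.const_mul _),
    integral_sub hf₂ ((hf₁.const_inner w).const_mul 2), integral_const_mul, integral_const_mul,
    integral_inner hf₁]

section Flux

open InnerProductSpace

variable {E : Type*} [NormedAddCommGroup E] [InnerProductSpace ℝ E] [CompleteSpace E]

def fokkerPlanckFlux (D : ℝ) (u : E) (f : E → ℝ) (w : E) : E :=
  gradient (fun y => D * f y) w + f w • (w - u)

variable {D : ℝ} {u : E} {f : E → ℝ}

theorem gradient_const_mul {x : E} (hf : DifferentiableAt ℝ f x) :
    gradient (fun y => D * f y) x = D • gradient f x := by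
  simp [gradient, fderiv_const_mul hf]

theorem hasFDerivAt_gradient {x : E} {f'' : E →L[ℝ] StrongDual ℝ E}
    (hf : HasFDerivAt (fderiv ℝ f) f'' x) :
    HasFDerivAt (gradient f)
      ((toDual ℝ E).symm.toContinuousLinearEquiv.toContinuousLinearMap ∘L f'') x :=
  (toDual ℝ E).symm.toContinuousLinearEquiv.hasFDerivAt.comp x hf

theorem hasFDerivAt_fokkerPlanckFlux (hf : ContDiff ℝ 2 f) (x : E) :
    HasFDerivAt (fokkerPlanckFlux D u f)
      (D • ((toDual ℝ E).symm.toContinuousLinearEquiv.toContinuousLinearMap ∘L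
          fderiv ℝ (fderiv ℝ f) x) +
        (f x • ContinuousLinearMap.id ℝ E + (fderiv ℝ f x).smulRight (x - u))) x := by
  have hf₁ : Differentiable ℝ f := hf.differentiable (by norm_num)
  have hf₂ : Differentiable ℝ (fderiv ℝ f) :=
    (hf.fderiv_right (m := 1) (by norm_num)).differentiable (by norm_num)
  have hflux : fokkerPlanckFlux D u f = fun w => D • gradient f w + f w • (w - u) := by
    funext w
    simp only [fokkerPlanckFlux, gradient_const_mul (hf₁ w)]
  rw [hflux]
  exact ((hasFDerivAt_gradient (hf₂ x).hasFDerivAt).const_smul D).add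
    ((hf₁ x).hasFDerivAt.smul ((hasFDerivAt_id x).sub_const u))

theorem norm_fderiv_fokkerPlanckFlux_le (hf : ContDiff ℝ 2 f) (x : E) :
    ‖fderiv ℝ (fokkerPlanckFlux D u f) x‖
      ≤ |D| * ‖fderiv ℝ (fderiv ℝ f) x‖ + ‖f x‖ + ‖fderiv ℝ f x‖ * ‖x - u‖ := by
  set A := fderiv ℝ (fderiv ℝ f) x
  have hA : ‖(toDual ℝ E).symm.toContinuousLinearEquiv.toContinuousLinearMap ∘L A‖ ≤ ‖A‖ :=
    ContinuousLinearMap.opNorm_le_bound _ (by positivity) fun v => by simpa using A.le_opNorm v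
  rw [(hasFDerivAt_fokkerPlanckFlux hf x).fderiv]
  refine (norm_add_le _ _).trans ?_
  grw [norm_add_le, norm_smul, norm_smul, hA, ContinuousLinearMap.norm_smulRight_apply,
    ContinuousLinearMap.norm_id_le, Real.norm_eq_abs, mul_one, add_assoc]

theorem inner_fokkerPlanckFlux {x : E} (hf : DifferentiableAt ℝ f x) :
    inner ℝ x (fokkerPlanckFlux D u f x) = D * fderiv ℝ f x x + f x * inner ℝ x (x - u) := by
  simp [fokkerPlanckFlux, gradient_const_mul hf, inner_add_right, inner_smul_right,
    inner_gradient_right]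

theorem hasGaussianDecay_fokkerPlanckFlux (hf : Differentiable ℝ f) (h₀ : HasGaussianDecay f)
    (h₁ : HasGaussianDecay (fderiv ℝ f)) : HasGaussianDecay (fokkerPlanckFlux D u f) := by
  refine (h₁.of_norm_le_poly_mul |D| 0 fun v => ?_).add
    (h₀.of_norm_le_poly_mul (1 + ‖u‖) 1 fun v => ?_)
  · rw [gradient_const_mul (hf v), norm_smul]
    simp [gradient]
  · rw [norm_smul, mul_comm, pow_one]
    gcongr
    exact norm_sub_le_one_add_mul_one_add v u

theorem hasGaussianDecay_fderiv_fokkerPlanckFlux (hf : ContDiff ℝ 2 f)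
    (h₀ : HasGaussianDecay f) (h₁ : HasGaussianDecay (fderiv ℝ f))
    (h₂ : HasGaussianDecay (fderiv ℝ (fderiv ℝ f))) :
    HasGaussianDecay (fderiv ℝ (fokkerPlanckFlux D u f)) := by
  have hbound : HasGaussianDecay fun x =>
      |D| * ‖fderiv ℝ (fderiv ℝ f) x‖ + ‖f x‖ + ‖fderiv ℝ f x‖ * ‖x - u‖ :=
    ((h₂.of_norm_le_poly_mul |D| 0 fun x => ?_).add (h₀.of_norm_le fun x => ?_)).add
      (h₁.of_norm_le_poly_mul (1 + ‖u‖) 1 fun x => ?_)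
  · exact hbound.of_norm_le fun x =>
      (norm_fderiv_fokkerPlanckFlux_le hf x).trans (Real.le_norm_self _)
  · rw [norm_mul, Real.norm_eq_abs, abs_abs, Real.norm_of_nonneg (by positivity), pow_zero,
      mul_one]
  · simp
  · rw [norm_mul, norm_norm, norm_norm, mul_comm, pow_one]
    gcongr
    exact norm_sub_le_one_add_mul_one_add x u

end Flux

section Euclidean

variable {d : ℕ}

local notation "ℝ^" d:max => EuclideanSpace ℝ (Fin d)

theorem GaussianDominated.hasGaussianDecay {f : ℝ^d → ℝ} (hf : GaussianDominated f) :
    HasGaussianDecay f ∧ HasGaussianDecay (fderiv ℝ f) ∧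
      HasGaussianDecay (fderiv ℝ (fderiv ℝ f)) := by
  obtain ⟨C, a, -, ha, hC⟩ := hf
  refine ⟨⟨a, C, ha, fun v => ?_⟩, ⟨a, C, ha, fun v => ?_⟩, ⟨a, C, ha, fun v => ?_⟩⟩
  · simpa using hC 0 (by norm_num) v
  · simpa using hC 1 (by norm_num) v
  · rw [← norm_iteratedFDeriv_one (𝕜 := ℝ), norm_iteratedFDeriv_fderiv]
    exact hC 2 (by norm_num) v

theorem EuclideanSpace.clm_apply_eq_sum (L : ℝ^d →L[ℝ] ℝ) (x : ℝ^d) :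
    L x = ∑ i, L (EuclideanSpace.single i 1) * x i := by
  conv_lhs => rw [← (EuclideanSpace.basisFun (Fin d) ℝ).sum_repr x]
  simp [mul_comm]

theorem vdiv_id (v : ℝ^d) : vdiv id v = d := by
  simp [vdiv]

theorem QFP_eq_mul_vdiv (c n m T : ℝ) (u : ℝ^d) (f : ℝ^d → ℝ) (v : ℝ^d) :
    QFP c n m T u f v = c * n * vdiv (fokkerPlanckFlux (T / m) u f) v :=
  rfl

theorem integral_mul_vdiv_eq_neg {g : ℝ^d → ℝ} {F : ℝ^d → ℝ^d}
    (hg : Differentiable ℝ g) (hF : Differentiable ℝ F)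
    (hgF : Integrable fun v => g v • F v)
    (hgDF : ∀ w, Integrable fun v => g v • fderiv ℝ F v w)
    (hDgF : ∀ w, Integrable fun v => fderiv ℝ g v w • F v) :
    ∫ v, g v * vdiv F v = -∫ v, fderiv ℝ g v (F v) := by
  have hcoord : ∀ i, ∫ v, g v * fderiv ℝ F v (EuclideanSpace.single i 1) i
      = -∫ v, fderiv ℝ g v (EuclideanSpace.single i 1) * F v i := by
    intro i
    have h := congrArg (EuclideanSpace.proj i : ℝ^d →L[ℝ] ℝ)
      (integral_smul_fderiv_eq_neg_fderiv_smul_of_integrable (hDgF (EuclideanSpace.single i 1))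
        (hgDF _) hgF (fun x _ => hg x) (fun x _ => hF x))
    rw [← ContinuousLinearMap.integral_comp_comm _ (hgDF _), map_neg,
      ← ContinuousLinearMap.integral_comp_comm _ (hDgF _)] at h
    simpa using h
  have hint : ∀ i, Integrable fun v => fderiv ℝ g v (EuclideanSpace.single i 1) * F v i :=
    fun i => by simpa using (EuclideanSpace.proj i : ℝ^d →L[ℝ] ℝ).integrable_comp (hDgF _)
  calc ∫ v, g v * vdiv F v
      = ∫ v, ∑ i, g v * fderiv ℝ F v (EuclideanSpace.single i 1) i := by
        simp only [vdiv, Finset.mul_sum]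
    _ = -∑ i, ∫ v, fderiv ℝ g v (EuclideanSpace.single i 1) * F v i := by
        rw [integral_finsetSum _ fun i _ => ?_]
        · simp only [hcoord, Finset.sum_neg_distrib]
        · simpa using (EuclideanSpace.proj i : ℝ^d →L[ℝ] ℝ).integrable_comp (hgDF _)
    _ = -∫ v, fderiv ℝ g v (F v) := by
        rw [← integral_finsetSum _ fun i _ => hint i]
        simp only [← EuclideanSpace.clm_apply_eq_sum]

theorem integral_fderiv_apply_self {f : ℝ^d → ℝ} (hf : Differentiable ℝ f)
    (hf₀ : HasGaussianDecay f) (hf₁ : HasGaussianDecay (fderiv ℝ f)) :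
    ∫ v, fderiv ℝ f v v = -(d * ∫ v, f v) := by
  have hfi : Integrable f := hf₀.integrable hf.continuous.aestronglyMeasurable
  have h := integral_mul_vdiv_eq_neg (F := id) hf differentiable_id
    (hf₀.integrable_smul_self hf.continuous) (fun w => by simpa using hfi.smul_const w)
    (fun w => (hf₁.of_norm_le_poly_mul ‖w‖ 1 fun v => ?_).integrable (by fun_prop))
  · simp only [vdiv_id, id] at h
    rw [integral_mul_const] at h
    linarith
  · rw [norm_smul, pow_one]
    calc ‖fderiv ℝ f v w‖ * ‖id v‖ ≤ ‖fderiv ℝ f v‖ * ‖w‖ * (1 + ‖v‖) := by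
          gcongr
          · exact (fderiv ℝ f v).le_opNorm w
          · exact le_add_of_nonneg_left zero_le_one
      _ = _ := by ring

theorem integral_norm_sq_mul_vdiv {F : ℝ^d → ℝ^d} (hF : Differentiable ℝ F)
    (hF₀ : HasGaussianDecay F) (hF₁ : HasGaussianDecay (fderiv ℝ F)) :
    ∫ v, ‖v‖ ^ 2 * vdiv F v = -(2 * ∫ v, inner ℝ v (F v)) := by
  have hv : ∀ v : ℝ^d, ‖v‖ ≤ 1 + ‖v‖ := fun v => le_add_of_nonneg_left zero_le_one
  have hFc := hF.continuous
  have hDg : ∀ v w : ℝ^d, fderiv ℝ (fun v => ‖v‖ ^ 2) v w = 2 * inner ℝ v w := by simp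
  have hDgF : ∀ w, Integrable fun v => fderiv ℝ (fun v : ℝ^d => ‖v‖ ^ 2) v w • F v := by
    intro w
    simp only [hDg]
    refine (hF₀.of_norm_le_poly_mul (2 * ‖w‖) 1 fun v => ?_).integrable (by fun_prop)
    rw [norm_smul, norm_mul, Real.norm_two, pow_one]
    calc 2 * ‖inner ℝ v w‖ * ‖F v‖ ≤ 2 * (‖v‖ * ‖w‖) * ‖F v‖ := by
          gcongr
          exact norm_inner_le_norm v w
      _ ≤ 2 * ((1 + ‖v‖) * ‖w‖) * ‖F v‖ := by gcongr; exact hv v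
      _ = _ := by ring
  rw [integral_mul_vdiv_eq_neg (g := fun v => ‖v‖ ^ 2) (differentiable_id.norm_sq ℝ) hF
    ((hF₀.of_norm_le_poly_mul 1 2 fun v => ?_).integrable (by fun_prop))
    (fun w => (hF₁.of_norm_le_poly_mul ‖w‖ 2 fun v => ?_).integrable (by fun_prop)) hDgF]
  · simp [integral_const_mul]
  · rw [norm_smul, one_mul, norm_pow, norm_norm]
    gcongr
    exact hv v
  · rw [norm_smul, norm_pow, norm_norm]
    calc ‖v‖ ^ 2 * ‖fderiv ℝ F v w‖ ≤ (1 + ‖v‖) ^ 2 * (‖fderiv ℝ F v‖ * ‖w‖) := by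
          gcongr
          · exact hv v
          · exact (fderiv ℝ F v).le_opNorm w
      _ = _ := by ring

theorem integral_inner_fokkerPlanckFlux {D : ℝ} {u : ℝ^d} {f : ℝ^d → ℝ}
    (hf : Differentiable ℝ f) (hf₀ : HasGaussianDecay f) (hf₁ : HasGaussianDecay (fderiv ℝ f)) :
    ∫ v, inner ℝ v (fokkerPlanckFlux D u f v)
      = -(D * d * ∫ v, f v) + (∫ v, ‖v‖ ^ 2 * f v) - inner ℝ u (∫ v, f v • v) := by
  have hDf : Integrable fun v => fderiv ℝ f v v :=
    (hf₁.of_norm_le_poly_mul 1 1 fun v => by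
      rw [pow_one, one_mul, mul_comm]
      exact ((fderiv ℝ f v).le_opNorm v).trans (by gcongr; linarith)).integrable
      (ContinuousLinearMap.measurable_apply₂.comp
        ((measurable_fderiv ℝ f).prodMk measurable_id)).aestronglyMeasurable
  have hm₁ := hf₀.integrable_smul_self hf.continuous
  have hm₂ := hf₀.integrable_norm_sq_mul hf.continuous
  have hpoint : ∀ v, inner ℝ v (fokkerPlanckFlux D u f v)
      = D * fderiv ℝ f v v + (‖v‖ ^ 2 * f v - inner ℝ u (f v • v)) := fun v => by
    rw [inner_fokkerPlanckFlux (hf v), inner_sub_right, inner_smul_right,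
      real_inner_self_eq_norm_sq, real_inner_comm]
    ring
  simp_rw [hpoint]
  rw [integral_add (hDf.const_mul D) (g := fun v => ‖v‖ ^ 2 * f v - inner ℝ u (f v • v))
      (hm₂.sub (hm₁.const_inner u)), integral_const_mul,
    integral_fderiv_apply_self hf hf₀ hf₁, integral_sub hm₂ (hm₁.const_inner u),
    integral_inner hm₁]
  ring

theorem integral_kineticEnergy_mul_QFP {c n m T : ℝ} (hm : m ≠ 0) {u : ℝ^d} {f : ℝ^d → ℝ}
    (hf : ContDiff ℝ 2 f) (hf₀ : HasGaussianDecay f) (hf₁ : HasGaussianDecay (fderiv ℝ f))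
    (hf₂ : HasGaussianDecay (fderiv ℝ (fderiv ℝ f))) :
    ∫ v, m / 2 * ‖v‖ ^ 2 * QFP c n m T u f v
      = c * n * (d * T * (∫ v, f v) - m * (∫ v, ‖v‖ ^ 2 * f v) + m * inner ℝ u (∫ v, f v • v)) := by
  have hdiff : Differentiable ℝ f := hf.differentiable (by norm_num)
  have h := integral_norm_sq_mul_vdiv
    (fun x => (hasFDerivAt_fokkerPlanckFlux (D := T / m) (u := u) hf x).differentiableAt)
    (hasGaussianDecay_fokkerPlanckFlux hdiff hf₀ hf₁)
    (hasGaussianDecay_fderiv_fokkerPlanckFlux hf hf₀ hf₁ hf₂)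
  rw [integral_inner_fokkerPlanckFlux hdiff hf₀ hf₁] at h
  calc ∫ v, m / 2 * ‖v‖ ^ 2 * QFP c n m T u f v
      = ∫ v, m / 2 * (c * n) * (‖v‖ ^ 2 * vdiv (fokkerPlanckFlux (T / m) u f) v) := by
        simp only [QFP_eq_mul_vdiv]
        congr 1
        funext v
        ring
    _ = _ := by
        rw [integral_const_mul, h]
        field_simp
        ring

end Euclidean

theorem energy_exchange_term_general
    (d : ℕ) (hd : 1 ≤ d) (m1 c12 n2 T12 : ℝ)
    (hm1 : 0 < m1)
    (u12 : EuclideanSpace ℝ (Fin d))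
    (f1 : EuclideanSpace ℝ (Fin d) → ℝ)
    (hf1 : ContDiff ℝ (⊤ : ℕ∞) f1) (hf1pos : ∀ v, 0 < f1 v)
    (hf1G : GaussianDominated f1)
    (n1 : ℝ) (hn1 : n1 = ∫ v, f1 v)
    (u1 : EuclideanSpace ℝ (Fin d)) (hu1 : u1 = (1 / n1) • ∫ v, f1 v • v)
    (T1 : ℝ) (hT1 : T1 = (1 / ((d : ℝ) * n1)) * ∫ v, m1 * ‖v - u1‖ ^ 2 * f1 v)
    (Q12 : EuclideanSpace ℝ (Fin d) → ℝ) (hQ12 : Q12 = QFP c12 n2 m1 T12 u12 f1) :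
    (∫ v, (m1 / 2) * ‖v‖ ^ 2 * Q12 v)
      = c12 * n1 * n2 * (d : ℝ) * (T12 - T1)
        - c12 * m1 * n1 * n2 * (inner ℝ u1 (u1 - u12) : ℝ) := by
  obtain ⟨h₀, h₁, h₂⟩ := hf1G.hasGaussianDecay
  have hint := h₀.integrable hf1.continuous.aestronglyMeasurable
  have hmass : 0 < n1 := hn1 ▸ integral_pos_of_integrable_nonneg_nonzero hf1.continuous hint
    (fun v => (hf1pos v).le) (hf1pos 0).ne'
  have hdim : (d : ℝ) ≠ 0 := Nat.cast_ne_zero.mpr (by omega)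
  have hmean : ∫ v, f1 v • v = n1 • u1 := by
    rw [hu1, smul_smul, mul_one_div_cancel hmass.ne', one_smul]
  have hT : (d : ℝ) * n1 * T1 = m1 * ((∫ v, ‖v‖ ^ 2 * f1 v) - n1 * ‖u1‖ ^ 2) := by
    simp_rw [hT1, mul_assoc m1]
    rw [integral_const_mul, integral_norm_sub_sq_mul hint (h₀.integrable_smul_self hf1.continuous)
      (h₀.integrable_norm_sq_mul hf1.continuous), hmean, ← hn1, inner_smul_right,
      real_inner_self_eq_norm_sq]
    field_simp
    ring
  rw [hQ12, integral_kineticEnergy_mul_QFP hm1.ne' (hf1.of_le (by norm_cast)) h₀ h₁ h₂, hmean,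
    ← hn1, inner_smul_right, inner_sub_right, real_inner_self_eq_norm_sq, real_inner_comm u12 u1]
  linear_combination (c12 * n2) * hT

/-- The energy exchange term of the mixture Fokker–Planck operator:
`∫ (m1/2)|v|² Q12 dv = c12 n1 n2 d (T12 - T1) - c12 m1 n1 n2 u1·(u1 - u12)`. -/
theorem energy_exchange_term
    (d : ℕ) (hd : 1 ≤ d) (m1 c12 n2 T12 : ℝ)
    (hm1 : 0 < m1) (hc12 : 0 < c12) (hn2 : 0 < n2) (hT12 : 0 < T12)
    (u12 : EuclideanSpace ℝ (Fin d))
    (f1 : EuclideanSpace ℝ (Fin d) → ℝ)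
    (hf1 : ContDiff ℝ (⊤ : ℕ∞) f1) (hf1pos : ∀ v, 0 < f1 v)
    (hf1G : GaussianDominated f1)
    (n1 : ℝ) (hn1 : n1 = ∫ v, f1 v)
    (u1 : EuclideanSpace ℝ (Fin d)) (hu1 : u1 = (1 / n1) • ∫ v, f1 v • v)
    (T1 : ℝ) (hT1 : T1 = (1 / ((d : ℝ) * n1)) * ∫ v, m1 * ‖v - u1‖ ^ 2 * f1 v)
    (Q12 : EuclideanSpace ℝ (Fin d) → ℝ) (hQ12 : Q12 = QFP c12 n2 m1 T12 u12 f1) :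
    (∫ v, (m1 / 2) * ‖v‖ ^ 2 * Q12 v)
      = c12 * n1 * n2 * (d : ℝ) * (T12 - T1)
        - c12 * m1 * n1 * n2 * (inner ℝ u1 (u1 - u12) : ℝ) :=
  energy_exchange_term_general d hd m1 c12 n2 T12 hm1 u12 f1 hf1 hf1pos hf1G n1 hn1 u1 hu1 T1 hT1
    Q12 hQ12
end
end

section
/- Let ε > 0 and α ∈ ℝ with ε/(1+ε) ≤ α ≤ 1, and let T1, T2 ∈ ℝ. Define T̄12 = α T1 + (1−α) T2 and T̄21 = ε(1−α) T1 + (1 − ε(1−α)) T2. Then ε T1 T̄21 + T̄12 T2 ≤ (1+ε) T̄12 T̄21. -/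
open Real

/-- The temperature inequality `ε T1 T̄21 + T̄12 T2 ≤ (1+ε) T̄12 T̄21` for the
temperature parts of the mixture temperatures. -/
theorem temperature_part_inequality
    (ε α T1 T2 : ℝ) (hε : 0 < ε)
    (hα0 : ε / (1 + ε) ≤ α) (hα1 : α ≤ 1)
    (Tb12 Tb21 : ℝ)
    (hTb12 : Tb12 = α * T1 + (1 - α) * T2)
    (hTb21 : Tb21 = ε * (1 - α) * T1 + (1 - ε * (1 - α)) * T2) :
    ε * T1 * Tb21 + Tb12 * T2 ≤ (1 + ε) * Tb12 * Tb21 := by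
  have h1 : (0:ℝ) < 1 + ε := by linarith
  have hαε : ε ≤ α * (1 + ε) := by
    have := (div_le_iff₀ h1).mp hα0
    linarith
  have key : ε * (1 - α) * (α * (1 + ε) - ε) * (T1 - T2) ^ 2 ≥ 0 := by
    have h2 : 0 ≤ ε * (1 - α) := by nlinarith
    have h3 : 0 ≤ α * (1 + ε) - ε := by linarith
    positivity
  subst hTb12 hTb21
  nlinarith [key, sq_nonneg (T1 - T2)]
end

section
/- Let d ≥ 1 be an integer, m1, m2 > 0, and let ε, δ, γ ∈ ℝ satisfy 0 < ε ≤ 1, ε·m1/m2 ≤ 1, ε/(1+ε) ≤ δ ≤ 1, and (1−δ)²·m1/d ≤ γ ≤ (1−δ)·(m1/d)·ε/(1+ε). Define γ1 = (1−δ)²·m1/d, γ2 = (1−δ)²·ε²·m1²/(d·m2), and γ̃ = (m1/d)·ε·(1−δ) − ε·γ. Then ε·γ1·γ̃ + γ·γ2 ≤ (1+ε)·γ·γ̃. -/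
open Real

/-- The coefficient inequality `ε γ1 γ̃ + γ γ2 ≤ (1+ε) γ γ̃` for the
drift-energy coefficients of the two-species Fokker–Planck model. -/
theorem gamma_coefficient_inequality
    (d : ℕ) (hd : 1 ≤ d) (m1 m2 : ℝ) (hm1 : 0 < m1) (hm2 : 0 < m2)
    (ε δ γ : ℝ) (hε0 : 0 < ε) (hε1 : ε ≤ 1) (hεm : ε * m1 / m2 ≤ 1)
    (hδ0 : ε / (1 + ε) ≤ δ) (hδ1 : δ ≤ 1)
    (hγ0 : (1 - δ) ^ 2 * m1 / (d : ℝ) ≤ γ)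
    (hγ1 : γ ≤ (1 - δ) * (m1 / (d : ℝ)) * (ε / (1 + ε)))
    (γ1 γ2 γt : ℝ)
    (hγ1def : γ1 = (1 - δ) ^ 2 * m1 / (d : ℝ))
    (hγ2def : γ2 = (1 - δ) ^ 2 * ε ^ 2 * m1 ^ 2 / ((d : ℝ) * m2))
    (hγtdef : γt = (m1 / (d : ℝ)) * ε * (1 - δ) - ε * γ) :
    ε * γ1 * γt + γ * γ2 ≤ (1 + ε) * γ * γt := by
  have hD : (0 : ℝ) < d := by exact_mod_cast Nat.lt_of_lt_of_le Nat.zero_lt_one hd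
  set a := (1 - δ) * (m1 / (d : ℝ)) with ha
  have hδ' : (0 : ℝ) ≤ 1 - δ := by linarith
  have haa : 0 ≤ a := mul_nonneg hδ' (by positivity)
  have h1 : γ1 = (1 - δ) * a := by rw [hγ1def, ha]; ring
  have hc : (1 - δ) * a ≤ γ := by
    have : (1 - δ) * a = (1 - δ) ^ 2 * m1 / (d : ℝ) := by rw [ha]; ring
    linarith [hγ0]
  have hγnn : 0 ≤ γ := le_trans (mul_nonneg hδ' haa) hc
  have hεp : (0 : ℝ) < 1 + ε := by linarith
  have h2γ : 2 * γ ≤ a := by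
    have h1 : γ ≤ a * (ε / (1 + ε)) := hγ1
    have h2 : a * (ε / (1 + ε)) * (1 + ε) = a * ε := by field_simp
    nlinarith [mul_le_mul_of_nonneg_right h1 (le_of_lt hεp)]
  have hγ2eq : γ2 = ((1 - δ) * a * ε) * (ε * m1 / m2) := by
    rw [hγ2def, ha]; field_simp
  have hXnn : 0 ≤ (1 - δ) * a * ε := mul_nonneg (mul_nonneg hδ' haa) (le_of_lt hε0)
  have hγ2le : γ2 ≤ (1 - δ) * a * ε := by
    rw [hγ2eq]
    nlinarith [mul_le_mul_of_nonneg_left hεm hXnn]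
  have hγγ2 : γ * γ2 ≤ γ * ((1 - δ) * a * ε) :=
    mul_le_mul_of_nonneg_left hγ2le hγnn
  have htγ : γt = ε * (a - γ) := by rw [hγtdef, ha]; ring
  rw [h1, htγ]
  nlinarith [hγγ2, hc, h2γ, hγnn, hε0, haa, hδ',
    mul_nonneg (mul_nonneg (le_of_lt hε0) hγnn) (by linarith : (0:ℝ) ≤ a - γ - (1 - δ) * a),
    mul_nonneg (mul_nonneg (mul_nonneg (le_of_lt hε0) (le_of_lt hε0)) (by linarith : (0:ℝ) ≤ a - γ)) (by linarith : (0:ℝ) ≤ γ - (1 - δ) * a)]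
end

section
/- Let d ≥ 1 be an integer, m1, m2 > 0, and let ε, α, δ, γ ∈ ℝ satisfy 0 < ε ≤ 1, ε·m1/m2 ≤ 1, ε/(1+ε) ≤ α ≤ 1, ε/(1+ε) ≤ δ ≤ 1, and (1−δ)²·m1/d ≤ γ ≤ (1−δ)·(m1/d)·ε/(1+ε). Let T1, T2 > 0 and u1, u2 ∈ ℝ^d. Define γ1 = (1−δ)²·m1/d, γ2 = (1−δ)²·ε²·m1²/(d·m2), γ̃ = (m1/d)·ε·(1−δ) − ε·γ, T̄12 = α T1 + (1−α) T2, and T̄21 = ε(1−α) T1 + (1 − ε(1−α)) T2. Then ε T1 γ̃ |u1−u2|² + ε γ1 |u1−u2|² T̄21 + T̄12 γ2 |u1−u2|² + γ |u1−u2|² T2 ≤ (1+ε) T̄12 γ̃ |u1−u2|² + (1+ε) γ |u1−u2|² T̄21. -/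
/-!
Both sides are linear in `T1`, `T2` and in `‖u1 - u2‖ ^ 2`. Since `εm1/m2 ≤ 1` we have
`γ2 ≤ ε γ1`, and `γ1 ≤ γ`, so replacing `γ1` by `γ` and `γ2` by `ε γ` only enlarges the left
side; the upper bound on `γ` says precisely that `γ ≤ γ̃`. The difference of the two sides is then
`T1 ((1+ε)α - ε)(γ̃ - γ) + T1 α(1-ε)γ + T2 (1-α)((1+ε)(γ̃ - γ) + (1-ε)γ)`,
a sum of nonnegative terms.
-/

theorem mixed_coefficient_scalar_inequality {ε α γ γt γ1 γ2 T1 T2 Tb12 Tb21 : ℝ}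
    (hε0 : 0 ≤ ε) (hε1 : ε ≤ 1) (hα0 : ε ≤ α * (1 + ε)) (hα1 : α ≤ 1)
    (hγ : 0 ≤ γ) (hγt : γ ≤ γt) (hγ1 : γ1 ≤ γ) (hγ2 : γ2 ≤ ε * γ)
    (hT1 : 0 ≤ T1) (hT2 : 0 ≤ T2)
    (hTb12 : Tb12 = α * T1 + (1 - α) * T2)
    (hTb21 : Tb21 = ε * (1 - α) * T1 + (1 - ε * (1 - α)) * T2) :
    ε * T1 * γt + ε * γ1 * Tb21 + Tb12 * γ2 + γ * T2
      ≤ (1 + ε) * Tb12 * γt + (1 + ε) * γ * Tb21 := by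
  have hα : 0 ≤ α := by nlinarith
  have hεα : ε * (1 - α) ≤ 1 := by nlinarith
  have hTb12_nonneg : 0 ≤ Tb12 :=
    hTb12 ▸ add_nonneg (mul_nonneg hα hT1) (mul_nonneg (sub_nonneg.2 hα1) hT2)
  have hTb21_nonneg : 0 ≤ Tb21 :=
    hTb21 ▸ add_nonneg (mul_nonneg (mul_nonneg hε0 (sub_nonneg.2 hα1)) hT1)
      (mul_nonneg (sub_nonneg.2 hεα) hT2)
  have key : (1 + ε) * Tb12 * γt + (1 + ε) * γ * Tb21
        - (ε * T1 * γt + ε * γ1 * Tb21 + Tb12 * γ2 + γ * T2)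
      = T1 * ((α * (1 + ε) - ε) * (γt - γ) + α * (1 - ε) * γ)
        + T2 * (1 - α) * ((1 + ε) * (γt - γ) + (1 - ε) * γ)
        + ε * Tb21 * (γ - γ1) + Tb12 * (ε * γ - γ2) := by
    subst hTb12 hTb21
    ring
  rw [← sub_nonneg, key]
  have := sub_nonneg.2 hα0; have := sub_nonneg.2 hα1; have := sub_nonneg.2 hε1
  have := sub_nonneg.2 hγt; have := sub_nonneg.2 hγ1; have := sub_nonneg.2 hγ2
  positivity

theorem mixed_coefficient_inequality_general
    (d : ℕ) (m1 m2 : ℝ) (hm1 : 0 < m1)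
    (ε α δ γ : ℝ) (hε0 : 0 < ε) (hε1 : ε ≤ 1) (hεm : ε * m1 / m2 ≤ 1)
    (hα0 : ε / (1 + ε) ≤ α) (hα1 : α ≤ 1)
    (hγ0 : (1 - δ) ^ 2 * m1 / (d : ℝ) ≤ γ)
    (hγ1 : γ ≤ (1 - δ) * (m1 / (d : ℝ)) * (ε / (1 + ε)))
    (T1 T2 : ℝ) (hT1 : 0 < T1) (hT2 : 0 < T2)
    (u1 u2 : EuclideanSpace ℝ (Fin d))
    (γ1 γ2 γt Tb12 Tb21 : ℝ)
    (hγ1def : γ1 = (1 - δ) ^ 2 * m1 / (d : ℝ))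
    (hγ2def : γ2 = (1 - δ) ^ 2 * ε ^ 2 * m1 ^ 2 / ((d : ℝ) * m2))
    (hγtdef : γt = (m1 / (d : ℝ)) * ε * (1 - δ) - ε * γ)
    (hTb12 : Tb12 = α * T1 + (1 - α) * T2)
    (hTb21 : Tb21 = ε * (1 - α) * T1 + (1 - ε * (1 - α)) * T2) :
    ε * T1 * γt * ‖u1 - u2‖ ^ 2 + ε * γ1 * ‖u1 - u2‖ ^ 2 * Tb21
      + Tb12 * γ2 * ‖u1 - u2‖ ^ 2 + γ * ‖u1 - u2‖ ^ 2 * T2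
    ≤ (1 + ε) * Tb12 * γt * ‖u1 - u2‖ ^ 2
      + (1 + ε) * γ * ‖u1 - u2‖ ^ 2 * Tb21 := by
  have hεpos : 0 < 1 + ε := by linarith
  have hγ1_nonneg : 0 ≤ γ1 := hγ1def ▸ by positivity
  have hγ1_le : γ1 ≤ γ := hγ1def ▸ hγ0
  have hγ_le_γt : γ ≤ γt := by
    rw [mul_div_assoc', le_div_iff₀ hεpos] at hγ1
    rw [hγtdef]
    linarith
  have hγ2_le : γ2 ≤ ε * γ :=
    calc γ2 = ε * γ1 * (ε * m1 / m2) := by rw [hγ2def, hγ1def]; ring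
      _ ≤ ε * γ1 := mul_le_of_le_one_right (by positivity) hεm
      _ ≤ ε * γ := by gcongr
  have hscalar := mixed_coefficient_scalar_inequality hε0.le hε1
    ((div_le_iff₀ hεpos).1 hα0) hα1 (hγ1_nonneg.trans hγ1_le) hγ_le_γt hγ1_le hγ2_le
    hT1.le hT2.le hTb12 hTb21
  linear_combination mul_le_mul_of_nonneg_right hscalar (sq_nonneg ‖u1 - u2‖)

/-- The mixed temperature–drift inequality used in the proof of the H-theorem. -/
theorem mixed_coefficient_inequality
    (d : ℕ) (hd : 1 ≤ d) (m1 m2 : ℝ) (hm1 : 0 < m1) (hm2 : 0 < m2)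
    (ε α δ γ : ℝ) (hε0 : 0 < ε) (hε1 : ε ≤ 1) (hεm : ε * m1 / m2 ≤ 1)
    (hα0 : ε / (1 + ε) ≤ α) (hα1 : α ≤ 1)
    (hδ0 : ε / (1 + ε) ≤ δ) (hδ1 : δ ≤ 1)
    (hγ0 : (1 - δ) ^ 2 * m1 / (d : ℝ) ≤ γ)
    (hγ1 : γ ≤ (1 - δ) * (m1 / (d : ℝ)) * (ε / (1 + ε)))
    (T1 T2 : ℝ) (hT1 : 0 < T1) (hT2 : 0 < T2)
    (u1 u2 : EuclideanSpace ℝ (Fin d))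
    (γ1 γ2 γt Tb12 Tb21 : ℝ)
    (hγ1def : γ1 = (1 - δ) ^ 2 * m1 / (d : ℝ))
    (hγ2def : γ2 = (1 - δ) ^ 2 * ε ^ 2 * m1 ^ 2 / ((d : ℝ) * m2))
    (hγtdef : γt = (m1 / (d : ℝ)) * ε * (1 - δ) - ε * γ)
    (hTb12 : Tb12 = α * T1 + (1 - α) * T2)
    (hTb21 : Tb21 = ε * (1 - α) * T1 + (1 - ε * (1 - α)) * T2) :
    ε * T1 * γt * ‖u1 - u2‖ ^ 2 + ε * γ1 * ‖u1 - u2‖ ^ 2 * Tb21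
      + Tb12 * γ2 * ‖u1 - u2‖ ^ 2 + γ * ‖u1 - u2‖ ^ 2 * T2
    ≤ (1 + ε) * Tb12 * γt * ‖u1 - u2‖ ^ 2
      + (1 + ε) * γ * ‖u1 - u2‖ ^ 2 * Tb21 :=
  mixed_coefficient_inequality_general d m1 m2 hm1 ε α δ γ hε0 hε1 hεm hα0 hα1 hγ0 hγ1 T1 T2 hT1 hT2
    u1 u2 γ1 γ2 γt Tb12 Tb21 hγ1def hγ2def hγtdef hTb12 hTb21
end

section
/- Let d ≥ 1 be an integer, m1, m2 > 0, and let ε, α, δ, γ ∈ ℝ satisfy 0 < ε ≤ 1, ε·m1/m2 ≤ 1, ε/(1+ε) ≤ α ≤ 1, ε/(1+ε) ≤ δ ≤ 1, and (1−δ)²·m1/d ≤ γ ≤ (1−δ)·(m1/d)·ε/(1+ε). Let T1, T2 > 0 and u1, u2 ∈ ℝ^d, and define γ1 = (1−δ)²·m1/d, γ2 = (1−δ)²·ε²·m1²/(d·m2), γ̃ = (m1/d)·ε·(1−δ) − ε·γ, T12 = α T1 + (1−α) T2 + γ|u1−u2|², and T21 = γ̃|u1−u2|² + ε(1−α) T1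 + (1 − ε(1−α)) T2. Then ε·(T1 + γ1|u1−u2|²)·T21 + T12·(T2 + γ2|u1−u2|²) ≤ (1+ε)·T12·T21. -/
open Real

set_option maxHeartbeats 1000000

/-- Auxiliary coefficient inequality. -/
lemma keyC_aux (ε α β κ γ M : ℝ) (hε0 : 0 < ε) (hε1 : ε ≤ 1)
    (hβ0 : 0 ≤ β) (hβ1 : β * (1 + ε) ≤ 1)
    (hκ0 : 0 ≤ κ) (hκ1 : κ ≤ 1) (hα1 : α ≤ 1) (hαl : ε ≤ α * (1 + ε))
    (hM : 0 < M) (hγl : β ^ 2 * M ≤ γ) (hγu : γ * (1 + ε) ≤ β * M * ε)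
    (hβε : β ^ 2 * (1 + ε) ≤ β * ε) :
    ε * (1 - α) * ((ε * β * M - ε * γ) - γ)
      ≤ ε ^ 2 * (1 - α) * (γ - β ^ 2 * M)
        + α * ((ε * β * M - ε * γ) - β ^ 2 * ε * M * κ) := by
  have hεp : (0:ℝ) < 1 + ε := by linarith
  have hκε : ε * κ ≤ 1 := by nlinarith [hκ1, hκ0]
  have hb : 0 ≤ 1 - α := by linarith
  have ha0 : 0 ≤ α := by nlinarith only [hαl, hε0, hεp]
  have hXY1 : 0 ≤ (β * (1 + ε) - β ^ 2 * (2 + κ + ε)) * (1 + ε) := by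
    nlinarith only [mul_nonneg (sub_nonneg.mpr hβε) (by linarith : (0:ℝ) ≤ 2 + κ + ε),
      mul_nonneg hβ0 (sub_nonneg.mpr hε1),
      mul_nonneg (mul_nonneg hβ0 hε0.le) (sub_nonneg.mpr hκ1), hε0, hεp]
  have hXY : 0 ≤ β * (1 + ε) - β ^ 2 * (2 + κ + ε) := by
    nlinarith only [hXY1, hεp]
  have hf1 : 0 ≤ β * (α * (1 - β - β * κ) - (1 - α) * (ε - β * (1 + ε))) := by
    nlinarith only [mul_nonneg (sub_nonneg.mpr hαl) hXY,
      mul_nonneg (mul_nonneg hβ0 hβ0) (sub_nonneg.mpr hκε), hεp, hε0]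
  have hfu : 0 ≤ ε * (1 - α) * (β * ε - β ^ 2 * (1 + ε))
      + α * (β - β ^ 2 * κ * (1 + ε)) := by
    have h1 : 0 ≤ β * ε - β ^ 2 * (1 + ε) := sub_nonneg.mpr hβε
    have h2 : 0 ≤ β - β ^ 2 * κ * (1 + ε) := by
      nlinarith only [mul_nonneg (mul_nonneg (sq_nonneg β) (sub_nonneg.mpr hκ1)) hεp.le,
        hβε, hε1, hβ0]
    exact add_nonneg (mul_nonneg (mul_nonneg hε0.le hb) h1) (mul_nonneg ha0 h2)
  rcases le_or_gt 0 ((1 - α) * (1 + 2 * ε) - α) with hS | hS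
  · nlinarith only [mul_nonneg (mul_nonneg hε0.le hM.le) hf1,
      mul_nonneg (sub_nonneg.mpr hγl) (mul_nonneg hε0.le hS)]
  · nlinarith only [mul_nonneg (mul_nonneg hε0.le hM.le) hfu,
      mul_nonneg (sub_nonneg.mpr hγu) (mul_nonneg hε0.le (by linarith : (0:ℝ) ≤ α - (1 - α) * (1 + 2 * ε))), hεp]

/-- Auxiliary assembly of the main inequality from the coefficient facts. -/
lemma keyMain_aux (ε α γ γ1 γ2 γt T1 T2 s : ℝ)
    (hε0 : 0 < ε) (hb : 0 ≤ 1 - α) (hA : 0 ≤ α - ε * (1 - α))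
    (hγγ1 : γ1 ≤ γ) (hγ1n : 0 ≤ γ1) (hγtγ : γ ≤ γt) (hγt2 : γ2 ≤ γt)
    (hγ2n : 0 ≤ γ2)
    (hC : ε * (1 - α) * (γt - γ) ≤ ε ^ 2 * (1 - α) * (γ - γ1) + α * (γt - γ2))
    (hT1 : 0 < T1) (hT2 : 0 < T2) (hs : 0 ≤ s) :
    ε * (T1 + γ1 * s) * (γt * s + ε * (1 - α) * T1 + (1 - ε * (1 - α)) * T2)
      + (α * T1 + (1 - α) * T2 + γ * s) * (T2 + γ2 * s)
      ≤ (1 + ε) * (α * T1 + (1 - α) * T2 + γ * s)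
        * (γt * s + ε * (1 - α) * T1 + (1 - ε * (1 - α)) * T2) := by
  have hγn : 0 ≤ γ := le_trans hγ1n hγγ1
  have hγtn : 0 ≤ γt := le_trans hγn hγtγ
  have hεα : 0 ≤ ε * (1 - ε * (1 - α)) := by nlinarith [hA, hb, hε0.le]
  have hQP : ε ^ 2 * (1 - α) * (γ - γ1) + α * (γt - γ2)
      ≤ ε * (γ - γ1) + (γt - γ2) := by
    nlinarith [mul_nonneg hεα (sub_nonneg.mpr hγγ1),
      mul_nonneg hb (sub_nonneg.mpr hγt2)]
  have hcn : 0 ≤ γt - γ := sub_nonneg.mpr hγtγ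
  have n1 : 0 ≤ ε * (1 - α) * (α - ε * (1 - α)) * (T1 - T2) ^ 2 :=
    mul_nonneg (mul_nonneg (mul_nonneg hε0.le hb) hA) (sq_nonneg _)
  have n2 : 0 ≤ s ^ 2 * (ε * (γ - γ1) * γt + (γt - γ2) * γ) :=
    mul_nonneg (sq_nonneg _) (add_nonneg
      (mul_nonneg (mul_nonneg hε0.le (sub_nonneg.mpr hγγ1)) hγtn)
      (mul_nonneg (sub_nonneg.mpr hγt2) hγn))
  have n3 : 0 ≤ s * ((ε ^ 2 * (1 - α) * (γ - γ1) + α * (γt - γ2))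
      - ε * (1 - α) * (γt - γ)) * T1 :=
    mul_nonneg (mul_nonneg hs (sub_nonneg.mpr hC)) hT1.le
  have n4 : 0 ≤ s * ((ε * (γ - γ1) + (γt - γ2)
      - (ε ^ 2 * (1 - α) * (γ - γ1) + α * (γt - γ2)))
      + ε * (1 - α) * (γt - γ)) * T2 :=
    mul_nonneg (mul_nonneg hs (add_nonneg (sub_nonneg.mpr hQP)
      (mul_nonneg (mul_nonneg hε0.le hb) hcn))) hT2.le
  nlinarith [n1, n2, n3, n4]

/-- The key inequality
`ε (T1 + γ1|u1-u2|²) T21 + T12 (T2 + γ2|u1-u2|²) ≤ (1+ε) T12 T21`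
which closes the proof of the H-theorem for mixtures. -/
theorem key_H_theorem_inequality
    (d : ℕ) (hd : 1 ≤ d) (m1 m2 : ℝ) (hm1 : 0 < m1) (hm2 : 0 < m2)
    (ε α δ γ : ℝ) (hε0 : 0 < ε) (hε1 : ε ≤ 1) (hεm : ε * m1 / m2 ≤ 1)
    (hα0 : ε / (1 + ε) ≤ α) (hα1 : α ≤ 1)
    (hδ0 : ε / (1 + ε) ≤ δ) (hδ1 : δ ≤ 1)
    (hγ0 : (1 - δ) ^ 2 * m1 / (d : ℝ) ≤ γ)
    (hγ1 : γ ≤ (1 - δ) * (m1 / (d : ℝ)) * (ε / (1 + ε)))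
    (T1 T2 : ℝ) (hT1 : 0 < T1) (hT2 : 0 < T2)
    (u1 u2 : EuclideanSpace ℝ (Fin d))
    (γ1 γ2 γt T12 T21 : ℝ)
    (hγ1def : γ1 = (1 - δ) ^ 2 * m1 / (d : ℝ))
    (hγ2def : γ2 = (1 - δ) ^ 2 * ε ^ 2 * m1 ^ 2 / ((d : ℝ) * m2))
    (hγtdef : γt = (m1 / (d : ℝ)) * ε * (1 - δ) - ε * γ)
    (hT12 : T12 = α * T1 + (1 - α) * T2 + γ * ‖u1 - u2‖ ^ 2)
    (hT21 : T21 = γt * ‖u1 - u2‖ ^ 2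
        + ε * (1 - α) * T1 + (1 - ε * (1 - α)) * T2) :
    ε * (T1 + γ1 * ‖u1 - u2‖ ^ 2) * T21 + T12 * (T2 + γ2 * ‖u1 - u2‖ ^ 2)
      ≤ (1 + ε) * T12 * T21 := by
  have hs : 0 ≤ ‖u1 - u2‖ ^ 2 := by positivity
  rw [hT12, hT21]
  set s : ℝ := ‖u1 - u2‖ ^ 2 with hsdef
  clear_value s
  clear hsdef hT12 hT21 u1 u2
  have hdp : (0:ℝ) < (d : ℝ) := by exact_mod_cast Nat.lt_of_lt_of_le Nat.zero_lt_one hd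
  have hde : (d:ℝ) ≠ 0 := ne_of_gt hdp
  set M : ℝ := m1 / (d:ℝ) with hMdef
  have hM : 0 < M := by positivity
  set β : ℝ := 1 - δ with hβdef
  clear_value β
  have hβ0 : 0 ≤ β := by rw [hβdef]; linarith
  set κ : ℝ := ε * m1 / m2 with hκdef
  have hκ0 : 0 ≤ κ := by positivity
  clear_value κ
  have hκ1 : κ ≤ 1 := hεm
  have hεp : (0:ℝ) < 1 + ε := by linarith
  have hγ1' : γ1 = β ^ 2 * M := by rw [hγ1def, hMdef]; ring
  have hγ2' : γ2 = β ^ 2 * ε * M * κ := by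
    rw [hγ2def, hMdef, hκdef]; field_simp
  have hγt' : γt = ε * β * M - ε * γ := by rw [hγtdef]; ring
  have hγl : β ^ 2 * M ≤ γ := by rw [hMdef, ← mul_div_assoc]; exact hγ0
  have hγu : γ * (1 + ε) ≤ β * M * ε := by
    have h : γ ≤ β * M * ε / (1 + ε) := by rw [mul_div_assoc]; exact hγ1
    linarith only [(le_div_iff₀ hεp).mp h]
  have hαl : ε ≤ α * (1 + ε) := by linarith only [(div_le_iff₀ hεp).mp hα0]
  have hδl : ε ≤ δ * (1 + ε) := by linarith only [(div_le_iff₀ hεp).mp hδ0]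
  have hβ1 : β * (1 + ε) ≤ 1 := by rw [hβdef]; nlinarith only [hδl, hε0]
  have hβε : β ^ 2 * (1 + ε) ≤ β * ε := by
    have h1 : β ^ 2 * M * (1 + ε) ≤ γ * (1 + ε) := mul_le_mul_of_nonneg_right hγl hεp.le
    have h2 : β ^ 2 * (1 + ε) * M ≤ β * ε * M := by nlinarith only [h1.trans hγu]
    exact le_of_mul_le_mul_right (by linarith only [h2]) hM
  have hγγ1 : γ1 ≤ γ := by rw [hγ1']; exact hγl
  have hγ1n : 0 ≤ γ1 := by rw [hγ1']; positivity
  have hγn : 0 ≤ γ := le_trans hγ1n hγγ1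
  have hγtγ : γ ≤ γt := by rw [hγt']; nlinarith only [hγu, hε0, hγn]
  have hγt2 : γ2 ≤ γt := by
    rw [hγ2', hγt']
    nlinarith only [mul_nonneg hε0.le (sub_nonneg.mpr hγu),
      mul_nonneg (mul_nonneg (sub_nonneg.mpr hβε) hε0.le) hM.le,
      mul_nonneg (mul_nonneg (mul_nonneg hβ0 (sub_nonneg.mpr hε1)) hε0.le) hM.le,
      mul_nonneg (mul_nonneg (mul_nonneg (sq_nonneg β) hε0.le) hM.le)
        (sub_nonneg.mpr hκ1), hεp, hε0]
  have hγ2n : 0 ≤ γ2 := by rw [hγ2']; positivity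
  have hb : 0 ≤ 1 - α := by linarith
  have hA : 0 ≤ α - ε * (1 - α) := by nlinarith only [hαl, hε0]
  have hC : ε * (1 - α) * (γt - γ)
      ≤ ε ^ 2 * (1 - α) * (γ - γ1) + α * (γt - γ2) := by
    rw [hγ1', hγ2', hγt']
    exact keyC_aux ε α β κ γ M hε0 hε1 hβ0 hβ1 hκ0 hκ1 hα1 hαl hM hγl hγu hβε
  exact keyMain_aux ε α γ γ1 γ2 γt T1 T2 s hε0 hb hA hγγ1 hγ1n hγtγ hγt2 hγ2n hC hT1 hT2 hs
end
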